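/- The abelianization G/[G,G] of the group G is isomorphic to ℤ² × (ℤ/2ℤ)². -/

import Mathlib

/-- The underlying set of the group `G` is `ℤ⁴`. -/
def G : Type := ℤ × ℤ × ℤ × ℤ

namespace G

/-- Build an element of `G` from four integers. -/
def mk (a b c d : ℤ) : G := (a, b, c, d)

/-- The twisted multiplication
`(a,b,c,d)·(a',b',c',d') = (a+a', b+b', c+(−1)^a·c', d+(−1)^a·d')`. -/
def mul' (x y : G) : G :=
  mk (x.1 + y.1) (x.2.1 + y.2.1)
    (x.2.2.1 + (x.1.negOnePow : ℤ) * y.2.2.1)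
    (x.2.2.2 + (x.1.negOnePow : ℤ) * y.2.2.2)

/-- The inverse `(a,b,c,d)⁻¹ = (−a, −b, −(−1)^a·c, −(−1)^a·d)`. -/
def inv' (x : G) : G :=
  mk (-x.1) (-x.2.1) (-((x.1.negOnePow : ℤ) * x.2.2.1)) (-((x.1.negOnePow : ℤ) * x.2.2.2))

instance instGroup : Group G where
  mul := mul'
  one := mk 0 0 0 0
  inv := inv'
  mul_assoc x y z := by
    show mul' (mul' x y) z = mul' x (mul' y z)
    obtain ⟨a, b, c, d⟩ := x
    obtain ⟨a', b', c', d'⟩ := y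
    obtain ⟨a'', b'', c'', d''⟩ := z
    simp only [mul', mk, Int.negOnePow_add, Units.val_mul]
    exact Prod.ext (by ring) (Prod.ext (by ring) (Prod.ext (by ring) (by ring)))
  one_mul x := by
    show mul' (mk 0 0 0 0) x = x
    obtain ⟨a, b, c, d⟩ := x
    simp [mul', mk]; rfl
  mul_one x := by
    show mul' x (mk 0 0 0 0) = x
    obtain ⟨a, b, c, d⟩ := x
    simp [mul', mk]; rfl
  inv_mul_cancel x := by
    show mul' (inv' x) x = mk 0 0 0 0
    obtain ⟨a, b, c, d⟩ := x
    simp only [mul', inv', mk, Int.negOnePow_neg]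
    exact Prod.ext (by ring) (Prod.ext (by ring) (Prod.ext (by ring) (by ring)))

def g₀ : G := mk 1 0 0 0
def g₁ : G := mk 0 1 0 0
def g₂ : G := mk 0 0 1 0
def g₃ : G := mk 0 0 0 1

end G

/-! Reducing `c` and `d` mod 2 is a surjection onto `ℤ² × (ℤ/2ℤ)²`; its target is abelian, so its
kernel contains `[G,G]`. Conversely, the kernel consists of the elements `x² = (0,0,2m,2n)` with
`x = (0,0,m,n)`, and since `g₀` conjugates `x` to `x⁻¹`, `x² = ⁅x, g₀⁆` is a commutator. -/

open scoped commutatorElement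

theorem sq_eq_commutatorElement_of_conj_eq_inv {H : Type*} [Group H] {g x : H}
    (h : g * x * g⁻¹ = x⁻¹) : x ^ 2 = ⁅x, g⁆ := by
  have hx : g * x⁻¹ * g⁻¹ = x := by simpa [mul_assoc] using congrArg (·⁻¹) h
  rw [commutatorElement_def, pow_two]
  nth_rw 2 [← hx]
  group

namespace G

theorem mk_mul_mk (a b c d a' b' c' d' : ℤ) :
    mk a b c d * mk a' b' c' d' =
      mk (a + a') (b + b') (c + a.negOnePow * c') (d + a.negOnePow * d') := rfl

theorem inv_mk (a b c d : ℤ) :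
    (mk a b c d)⁻¹ = mk (-a) (-b) (-(a.negOnePow * c)) (-(a.negOnePow * d)) := rfl

theorem g₀_mul_mk_zero_zero_mul_g₀_inv (c d : ℤ) :
    g₀ * mk 0 0 c d * g₀⁻¹ = (mk 0 0 c d)⁻¹ := by
  simp [g₀, mk_mul_mk, inv_mk]

theorem mk_zero_zero_sq (c d : ℤ) : mk 0 0 c d ^ 2 = mk 0 0 (2 * c) (2 * d) := by
  simp [pow_two, mk_mul_mk, two_mul]

def reduceModTwo : G →* Multiplicative (ℤ × ℤ × ZMod 2 × ZMod 2) where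
  toFun x := .ofAdd (x.1, x.2.1, x.2.2.1, x.2.2.2)
  map_one' := rfl
  map_mul' := by
    rintro ⟨a, b, c, d⟩ ⟨a', b', c', d'⟩
    change Multiplicative.ofAdd (a + a', b + b', ((c + a.negOnePow * c' : ℤ) : ZMod 2),
      ((d + a.negOnePow * d' : ℤ) : ZMod 2)) =
        .ofAdd ((a, b, (c : ZMod 2), (d : ZMod 2)) + (a', b', (c' : ZMod 2), (d' : ZMod 2)))
    -- the twist `(-1)^a` becomes `1` in `ZMod 2`
    simp

theorem reduceModTwo_surjective : Function.Surjective reduceModTwo := by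
  rintro ⟨a, b, c, d⟩
  refine ⟨mk a b c.val d.val, ?_⟩
  change Multiplicative.ofAdd (a, b, ((c.val : ℤ) : ZMod 2), ((d.val : ℤ) : ZMod 2)) =
    .ofAdd (a, b, c, d)
  simp

theorem ker_reduceModTwo : reduceModTwo.ker = commutator G := by
  refine le_antisymm ?_ (Abelianization.commutator_subset_ker _)
  rintro ⟨a, b, c, d⟩ hx
  change Multiplicative.ofAdd (a, b, (c : ZMod 2), (d : ZMod 2)) = 1 at hx
  simp only [ofAdd_eq_one, Prod.mk_eq_zero, ZMod.intCast_zmod_eq_zero_iff_dvd,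
    Nat.cast_ofNat] at hx
  obtain ⟨rfl, rfl, ⟨m, rfl⟩, ⟨n, rfl⟩⟩ := hx
  change mk 0 0 (2 * m) (2 * n) ∈ commutator G
  rw [← mk_zero_zero_sq,
    sq_eq_commutatorElement_of_conj_eq_inv (g₀_mul_mk_zero_zero_mul_g₀_inv m n), commutator_def]
  exact Subgroup.commutator_mem_commutator (Subgroup.mem_top _) (Subgroup.mem_top _)

end G

/-- The abelianization `G/[G,G]` is isomorphic to `ℤ² × (ℤ/2ℤ)²`. -/
theorem G_abelianization :
    Nonempty (Abelianization G ≃* Multiplicative (ℤ × ℤ × ZMod 2 × ZMod 2)) :=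
  ⟨(QuotientGroup.quotientMulEquivOfEq G.ker_reduceModTwo.symm).trans
    (QuotientGroup.quotientKerEquivOfSurjective _ G.reduceModTwo_surjective)⟩
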